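/- Criterion for (H) under an equivalent measure: Let (Ω,F,P) be a probability space with filtrations (F_t) ⊆ (G_t) satisfying the usual assumptions, and suppose every (F_t,P)-martingale is a (G_t,P)-martingale (the (H) hypothesis holds under P). Let Q ~ P with density Y = dQ/dP, and set R_t = E_P[Y | F_t] and R'_t = E_P[Y | G_t]. Then the (H) hypothesis holds under Q (every (F_t,Q)-martingale is a (G_t,Q)-martingale) if and only if for every t ≥ 0 and every nonnegative F_∞-measurable random variable X one has E_P[XY | G_t]/R'_t = E_P[XY | F_t]/R_t almost surely. -/

import Mathlib

open MeasureTheory Filter Set ProbabilityTheory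
open scoped NNReal ENNReal

noncomputable section

namespace Enlargement

variable {Ω : Type*} {m : MeasurableSpace Ω}

/-- A path `f : ℝ≥0 → ℝ` is càdlàg: right-continuous with left limits. -/
def IsCadlag (f : ℝ≥0 → ℝ) : Prop :=
  (∀ t : ℝ≥0, Tendsto f (nhdsWithin t (Set.Ici t)) (nhds (f t))) ∧
  (∀ t : ℝ≥0, 0 < t → ∃ l : ℝ, Tendsto f (nhdsWithin t (Set.Iio t)) (nhds l))

/-- `M` is a local martingale w.r.t. the filtration `𝓕` under `μ`: it is adapted and there is
an increasing sequence of stopping times `τ n → ∞` a.s. localizing `M` to martingales. -/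
def IsLocalMartingale (𝓕 : Filtration ℝ≥0 m) (μ : Measure Ω) (M : ℝ≥0 → Ω → ℝ) : Prop :=
  Adapted 𝓕 M ∧
  ∃ τ : ℕ → Ω → ℝ≥0,
    (∀ n, IsStoppingTime 𝓕 (fun ω => ((τ n ω : ℝ≥0) : WithTop ℝ≥0))) ∧
    (∀ n ω, τ n ω ≤ τ (n + 1) ω) ∧
    (∀ᵐ ω ∂μ, Tendsto (fun n => τ n ω) atTop atTop) ∧
    (∀ n, Martingale (fun t ω => M (min t (τ n ω)) ω) 𝓕 μ)

/-- `X` is a semimartingale w.r.t. `𝓕` under `μ`: adapted, a.s. càdlàg, and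
`X = X₀ + M + A` with `M` a càdlàg local martingale started at `0` and `A` a càdlàg
adapted process of finite variation on compact intervals started at `0`. -/
def IsSemimartingale (𝓕 : Filtration ℝ≥0 m) (μ : Measure Ω) (X : ℝ≥0 → Ω → ℝ) : Prop :=
  Adapted 𝓕 X ∧ (∀ᵐ ω ∂μ, IsCadlag fun t => X t ω) ∧
  ∃ M A : ℝ≥0 → Ω → ℝ,
    IsLocalMartingale 𝓕 μ M ∧ (∀ ω, M 0 ω = 0) ∧ (∀ᵐ ω ∂μ, IsCadlag fun t => M t ω) ∧
    Adapted 𝓕 A ∧ (∀ ω, A 0 ω = 0) ∧ (∀ᵐ ω ∂μ, IsCadlag fun t => A t ω) ∧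
    (∀ᵐ ω ∂μ, ∀ t : ℝ≥0, BoundedVariationOn (fun s => A s ω) (Set.Icc 0 t)) ∧
    (∀ t ω, X t ω = X 0 ω + M t ω + A t ω)

/-- The filtration `𝓕` satisfies the usual hypotheses under `μ`: it is complete
(`𝓕 0` contains all `μ`-null sets) and right-continuous. -/
def UsualConditions (𝓕 : Filtration ℝ≥0 m) (μ : Measure Ω) : Prop :=
  (∀ s : Set Ω, μ s = 0 → MeasurableSet[𝓕 0] s) ∧
  (∀ t : ℝ≥0, (𝓕 t : MeasurableSpace Ω) = ⨅ (u : ℝ≥0) (_ : t < u), (𝓕 u : MeasurableSpace Ω))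

/-- `𝓖` is the initial enlargement of `𝓕` by the random variable `Z`:
`𝓖 t = ⋂_{ε>0} (𝓕 (t+ε) ⊔ σ(Z))`. -/
def InitEnlargement (𝓕 : Filtration ℝ≥0 m) (Z : Ω → ℝ) (𝓖 : Filtration ℝ≥0 m) : Prop :=
  ∀ t : ℝ≥0, (𝓖 t : MeasurableSpace Ω) =
    ⨅ (ε : ℝ≥0) (_ : 0 < ε),
      ((𝓕 (t + ε) : MeasurableSpace Ω) ⊔ MeasurableSpace.comap Z inferInstance)

/-- `𝓖` is the progressive enlargement of `𝓕` by the random time `ρ`: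
`𝓖 t = ⋂_{ε>0} (𝓕 (t+ε) ⊔ σ(ρ ∧ (t+ε)))`; it is the smallest filtration satisfying the
usual hypotheses containing `𝓕` and making `ρ` a stopping time. -/
def ProgEnlargement (𝓕 : Filtration ℝ≥0 m) (ρ : Ω → ℝ≥0∞) (𝓖 : Filtration ℝ≥0 m) : Prop :=
  ∀ t : ℝ≥0, (𝓖 t : MeasurableSpace Ω) =
    ⨅ (ε : ℝ≥0) (_ : 0 < ε),
      ((𝓕 (t + ε) : MeasurableSpace Ω) ⊔
        MeasurableSpace.comap (fun ω => min (ρ ω) ((t + ε : ℝ≥0) : ℝ≥0∞)) inferInstance)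

/-! (H) holds for a pair `𝓕 ≤ 𝓖` under a measure exactly when conditioning an
`𝓕_∞`-measurable variable on `𝓖 t` gives the same as conditioning it on `𝓕 t`. For
`𝓕 u`-measurable variables this is the martingale property of `s ↦ E[X | 𝓕 s]` read in `𝓖`,
and Lévy's upward theorem passes to `𝓕_∞`; conversely the condition applied to `M t` makes an
`𝓕`-martingale `M` a `𝓖`-martingale. Bayes' formula `E_Q[X | 𝓗] = E_P[XY | 𝓗] / E_P[Y | 𝓗]`
translates the condition under `Q` into the stated one under `P`. -/

section Bayes

variable {μ : Measure Ω} {Y : Ω → ℝ}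

theorem integrable_withDensity_ofReal_iff (hY : AEMeasurable Y μ) (hY₀ : 0 ≤ᵐ[μ] Y)
    {f : Ω → ℝ} :
    Integrable f (μ.withDensity fun ω => ENNReal.ofReal (Y ω)) ↔
      Integrable (fun ω => f ω * Y ω) μ := by
  rw [integrable_withDensity_iff_integrable_smul₀' hY.ennreal_ofReal
    (ae_of_all _ fun _ => ENNReal.ofReal_lt_top)]
  refine integrable_congr ?_
  filter_upwards [hY₀] with ω hω
  simp [ENNReal.toReal_ofReal hω, mul_comm]

theorem setIntegral_withDensity_ofReal (hY : AEMeasurable Y μ) (hY₀ : 0 ≤ᵐ[μ] Y) (f : Ω → ℝ)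
    {s : Set Ω} (hs : MeasurableSet s) :
    ∫ ω in s, f ω ∂(μ.withDensity fun ω => ENNReal.ofReal (Y ω)) = ∫ ω in s, f ω * Y ω ∂μ := by
  rw [setIntegral_withDensity_eq_setIntegral_toReal_smul₀ hY.ennreal_ofReal.restrict
    (ae_of_all _ fun _ => ENNReal.ofReal_lt_top) f hs]
  refine setIntegral_congr_ae hs ?_
  filter_upwards [hY₀] with ω hω _
  simp [ENNReal.toReal_ofReal hω, mul_comm]

variable {m' : MeasurableSpace Ω} [IsFiniteMeasure μ]

theorem condExp_withDensity_mul_condExp (hm : m' ≤ m) (hY : AEMeasurable Y μ) (hY₀ : 0 ≤ᵐ[μ] Y)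
    (hYi : Integrable Y μ) {f : Ω → ℝ}
    (hf : Integrable f (μ.withDensity fun ω => ENNReal.ofReal (Y ω))) :
    (fun ω => (μ.withDensity fun ω => ENNReal.ofReal (Y ω))[f | m'] ω * μ[Y | m'] ω)
      =ᵐ[μ] μ[fun ω => f ω * Y ω | m'] := by
  set ν := μ.withDensity fun ω => ENNReal.ofReal (Y ω)
  have : IsFiniteMeasure ν := isFiniteMeasure_withDensity_ofReal hYi.2
  set g := ν[f | m']
  have hgY : Integrable (fun ω => g ω * Y ω) μ :=
    (integrable_withDensity_ofReal_iff hY hY₀).mp integrable_condExp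
  have hpull : μ[fun ω => g ω * Y ω | m'] =ᵐ[μ] fun ω => g ω * μ[Y | m'] ω :=
    condExp_mul_of_stronglyMeasurable_left stronglyMeasurable_condExp hgY hYi
  refine ae_eq_condExp_of_forall_setIntegral_eq hm
    ((integrable_withDensity_ofReal_iff hY hY₀).mp hf)
    (fun s _ _ => (integrable_condExp.congr hpull).integrableOn) (fun s hs _ => ?_)
    (stronglyMeasurable_condExp.mul stronglyMeasurable_condExp).aestronglyMeasurable
  calc ∫ ω in s, g ω * μ[Y | m'] ω ∂μ
      = ∫ ω in s, μ[fun ω => g ω * Y ω | m'] ω ∂μ :=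
        integral_congr_ae (ae_restrict_of_ae hpull.symm)
    _ = ∫ ω in s, g ω * Y ω ∂μ := setIntegral_condExp hm hgY hs
    _ = ∫ ω in s, g ω ∂ν := (setIntegral_withDensity_ofReal hY hY₀ g (hm _ hs)).symm
    _ = ∫ ω in s, f ω ∂ν := setIntegral_condExp hm hf hs
    _ = ∫ ω in s, f ω * Y ω ∂μ := setIntegral_withDensity_ofReal hY hY₀ f (hm _ hs)

theorem condExp_pos_of_ae_pos (hm : m' ≤ m) (hYi : Integrable Y μ)
    (hY : ∀ᵐ ω ∂μ, 0 < Y ω) : ∀ᵐ ω ∂μ, 0 < μ[Y | m'] ω := by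
  set S := {ω | μ[Y | m'] ω ≤ 0}
  have hS : MeasurableSet[m'] S :=
    (stronglyMeasurable_condExp (m := m') (μ := μ) (f := Y)).measurable measurableSet_Iic
  have hY₀ : 0 ≤ᵐ[μ.restrict S] Y := by
    filter_upwards [ae_restrict_of_ae hY] with ω hω using hω.le
  have hint : ∫ ω in S, Y ω ∂μ = 0 := by
    refine le_antisymm ?_ (integral_nonneg_of_ae hY₀)
    rw [← setIntegral_condExp hm hYi hS]
    exact setIntegral_nonpos (hm _ hS) fun ω hω => hω
  have hS_null : μ S = 0 := by
    have hY_zero := (setIntegral_eq_zero_iff_of_nonneg_ae hY₀ hYi.integrableOn).mp hint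
    have hfalse : ∀ᵐ ω ∂μ.restrict S, False := by
      filter_upwards [hY_zero, ae_restrict_of_ae hY] with ω h0 hpos
      exact hpos.ne' h0
    rwa [eventually_false_iff_eq_bot, ae_eq_bot, Measure.restrict_eq_zero] at hfalse
  rw [ae_iff]
  simpa [S] using hS_null

theorem condExp_mul_div_condExp_ae_eq_condExp_withDensity (hm : m' ≤ m) (hY : AEMeasurable Y μ)
    (hYpos : ∀ᵐ ω ∂μ, 0 < Y ω) (hYi : Integrable Y μ) {f : Ω → ℝ}
    (hf : Integrable f (μ.withDensity fun ω => ENNReal.ofReal (Y ω))) :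
    (fun ω => μ[fun ω' => f ω' * Y ω' | m'] ω / μ[Y | m'] ω)
      =ᵐ[μ] (μ.withDensity fun ω => ENNReal.ofReal (Y ω))[f | m'] := by
  have hY₀ : 0 ≤ᵐ[μ] Y := hYpos.mono fun _ h => h.le
  filter_upwards [condExp_withDensity_mul_condExp hm hY hY₀ hYi hf,
    condExp_pos_of_ae_pos hm hYi hYpos] with ω hbayes hpos
  rw [← hbayes, mul_div_cancel_right₀ _ hpos.ne']

end Bayes

section Hypothesis

def restrictNat (𝓕 : Filtration ℝ≥0 m) : Filtration ℕ m where
  seq n := 𝓕 n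
  mono' _ _ hij := 𝓕.mono (Nat.cast_le.mpr hij)
  le' n := 𝓕.le n

theorem iSup_restrictNat (𝓕 : Filtration ℝ≥0 m) :
    ⨆ n, restrictNat 𝓕 n = ⨆ s, 𝓕 s :=
  le_antisymm (iSup_le fun n => le_iSup (fun s => 𝓕 s) (n : ℝ≥0))
    (iSup_le fun s => (𝓕.mono (Nat.le_ceil s)).trans (le_iSup (fun n => restrictNat 𝓕 n) ⌈s⌉₊))

variable {ν : Measure Ω}

theorem condExp_ae_eq_of_forall_nonneg {m₁ m₂ m' : MeasurableSpace Ω}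
    (h : ∀ X : Ω → ℝ, 0 ≤ X → Measurable[m'] X → Integrable X ν → ν[X | m₁] =ᵐ[ν] ν[X | m₂])
    {X : Ω → ℝ} (hX : Measurable[m'] X) (hXi : Integrable X ν) : ν[X | m₁] =ᵐ[ν] ν[X | m₂] := by
  have hP := h (fun ω => max (X ω) 0) (fun _ => le_max_right _ _) (hX.max measurable_const)
    hXi.pos_part
  have hN := h (fun ω => max (-X ω) 0) (fun _ => le_max_right _ _) (hX.neg.max measurable_const)
    hXi.neg_part
  have hPN : X = (fun ω => max (X ω) 0) - fun ω => max (-X ω) 0 :=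
    funext fun ω => (max_zero_sub_max_neg_zero_eq_self (X ω)).symm
  rw [hPN]
  exact (condExp_sub hXi.pos_part hXi.neg_part m₁).trans
    ((hP.sub hN).trans (condExp_sub hXi.pos_part hXi.neg_part m₂).symm)

variable {𝓕 𝓖 : Filtration ℝ≥0 m}

theorem condExp_ae_eq_of_forall_martingale [IsFiniteMeasure ν]
    (hH : ∀ M : ℝ≥0 → Ω → ℝ, Martingale M 𝓕 ν → Martingale M 𝓖 ν) (t : ℝ≥0) {X : Ω → ℝ}
    (hX : StronglyMeasurable[⨆ s, 𝓕 s] X) (hXi : Integrable X ν) :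
    ν[X | 𝓖 t] =ᵐ[ν] ν[X | 𝓕 t] := by
  have hmart := hH _ (martingale_condExp X 𝓕 ν)
  have hbound : ∀ n : ℕ, t ≤ n →
      eLpNorm (ν[X | 𝓖 t] - ν[X | 𝓕 t]) 1 ν ≤ eLpNorm (ν[X | restrictNat 𝓕 n] - X) 1 ν := by
    intro n hn
    have hsplit : ν[X - ν[X | 𝓕 n] | 𝓖 t] =ᵐ[ν] ν[X | 𝓖 t] - ν[X | 𝓕 t] :=
      (condExp_sub hXi integrable_condExp _).trans (EventuallyEq.rfl.sub (hmart.2 t n hn))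
    calc eLpNorm (ν[X | 𝓖 t] - ν[X | 𝓕 t]) 1 ν = eLpNorm (ν[X - ν[X | 𝓕 n] | 𝓖 t]) 1 ν :=
          eLpNorm_congr_ae hsplit.symm
      _ ≤ eLpNorm (X - ν[X | 𝓕 n]) 1 ν := eLpNorm_condExp_le_eLpNorm _ le_rfl
      _ = _ := eLpNorm_sub_comm _ _ _ _
  have hlevy := hXi.tendsto_eLpNorm_condExp (ℱ := restrictNat 𝓕) (by rwa [iSup_restrictNat])
  have hzero : eLpNorm (ν[X | 𝓖 t] - ν[X | 𝓕 t]) 1 ν = 0 :=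
    nonpos_iff_eq_zero.mp <| ge_of_tendsto hlevy <| eventually_atTop.mpr
      ⟨⌈t⌉₊, fun n hn => hbound n ((Nat.le_ceil t).trans (by exact_mod_cast hn))⟩
  rw [eLpNorm_eq_zero_iff (integrable_condExp.sub integrable_condExp).aestronglyMeasurable
    one_ne_zero] at hzero
  exact (sub_ae_eq_zero _ _).mp hzero

theorem martingale_of_forall_condExp_ae_eq (hle : ∀ t, 𝓕 t ≤ 𝓖 t)
    (h : ∀ t (X : Ω → ℝ), Measurable[⨆ s, 𝓕 s] X → Integrable X ν →
      ν[X | 𝓖 t] =ᵐ[ν] ν[X | 𝓕 t])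
    {M : ℝ≥0 → Ω → ℝ} (hM : Martingale M 𝓕 ν) : Martingale M 𝓖 ν := by
  refine ⟨fun t => (hM.stronglyAdapted t).mono (hle t), fun s t hst => ?_⟩
  have hMt : Measurable[⨆ s, 𝓕 s] (M t) :=
    ((hM.stronglyAdapted t).mono (le_iSup (fun s => 𝓕 s) t)).measurable
  exact (h s (M t) hMt (hM.integrable t)).trans (hM.condExp_ae_eq hst)

theorem forall_martingale_iff_condExp_ae_eq [IsFiniteMeasure ν] (hle : ∀ t, 𝓕 t ≤ 𝓖 t) :
    (∀ M : ℝ≥0 → Ω → ℝ, Martingale M 𝓕 ν → Martingale M 𝓖 ν) ↔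
      ∀ t (X : Ω → ℝ), 0 ≤ X → Measurable[⨆ s, 𝓕 s] X → Integrable X ν →
        ν[X | 𝓖 t] =ᵐ[ν] ν[X | 𝓕 t] :=
  ⟨fun hH t _ _ hX hXi => condExp_ae_eq_of_forall_martingale hH t hX.stronglyMeasurable hXi,
    fun h _ => martingale_of_forall_condExp_ae_eq hle fun t _ hX hXi =>
      condExp_ae_eq_of_forall_nonneg (h t) hX hXi⟩

end Hypothesis

theorem H_equivalent_measure_criterion_general {μ ν : Measure Ω}
    [IsProbabilityMeasure μ] [IsProbabilityMeasure ν]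
    (𝓕 𝓖 : Filtration ℝ≥0 m)
    (hle : ∀ t : ℝ≥0, (𝓕 t : MeasurableSpace Ω) ≤ 𝓖 t)
    (hequiv : μ ≪ ν ∧ ν ≪ μ)
    (Y : Ω → ℝ) (hYmeas : Measurable Y) (hYpos : ∀ᵐ ω ∂μ, 0 < Y ω)
    (hYdens : ν = μ.withDensity (fun ω => ENNReal.ofReal (Y ω))) :
    (∀ M : ℝ≥0 → Ω → ℝ, Martingale M 𝓕 ν → Martingale M 𝓖 ν) ↔
      (∀ (t : ℝ≥0) (X : Ω → ℝ), 0 ≤ X →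
        Measurable[⨆ s : ℝ≥0, (𝓕 s : MeasurableSpace Ω)] X →
        (fun ω => (μ[fun ω' => X ω' * Y ω' | 𝓖 t]) ω / (μ[Y | 𝓖 t]) ω) =ᵐ[μ]
        (fun ω => (μ[fun ω' => X ω' * Y ω' | 𝓕 t]) ω / (μ[Y | 𝓕 t]) ω)) := by
  subst hYdens
  have hY₀ : 0 ≤ᵐ[μ] Y := hYpos.mono fun _ h => h.le
  have hYi : Integrable Y μ := by
    simpa using (integrable_withDensity_ofReal_iff hYmeas.aemeasurable hY₀).mp
      (integrable_const (1 : ℝ))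
  rw [forall_martingale_iff_condExp_ae_eq hle]
  refine forall₂_congr fun t X => imp_congr_right fun _ => imp_congr_right fun _ => ?_
  by_cases hXi : Integrable X (μ.withDensity fun ω => ENNReal.ofReal (Y ω))
  · have hbayes {m' : MeasurableSpace Ω} (hm : m' ≤ m) :=
      condExp_mul_div_condExp_ae_eq_condExp_withDensity hm hYmeas.aemeasurable hYpos hYi hXi
    refine ⟨fun h => ?_, fun h => ?_⟩
    · exact (hbayes (𝓖.le t)).trans ((hequiv.1.ae_eq (h hXi)).trans (hbayes (𝓕.le t)).symm)
    · exact fun _ => hequiv.2.ae_eq ((hbayes (𝓖.le t)).symm.trans (h.trans (hbayes (𝓕.le t))))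
  · have hXYi : ¬Integrable (fun ω => X ω * Y ω) μ :=
      mt (integrable_withDensity_ofReal_iff hYmeas.aemeasurable hY₀).mpr hXi
    simp [hXi, condExp_of_not_integrable hXYi]

/-- **Criterion for (H) under an equivalent measure.** Suppose (H) holds under `P` and
`Q ∼ P` with density `Y = dQ/dP`. Set `R t = E_P[Y | 𝓕 t]` and `R' t = E_P[Y | 𝓖 t]`.
Then (H) holds under `Q` iff for every `t` and every nonnegative `𝓕_∞`-measurable `X`,
`E_P[XY | 𝓖 t] / R' t = E_P[XY | 𝓕 t] / R t` a.s. -/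
theorem H_equivalent_measure_criterion {μ ν : Measure Ω}
    [IsProbabilityMeasure μ] [IsProbabilityMeasure ν]
    (𝓕 𝓖 : Filtration ℝ≥0 m)
    (h𝓕 : UsualConditions 𝓕 μ) (h𝓖 : UsualConditions 𝓖 μ)
    (hle : ∀ t : ℝ≥0, (𝓕 t : MeasurableSpace Ω) ≤ 𝓖 t)
    (hH : ∀ M : ℝ≥0 → Ω → ℝ, Martingale M 𝓕 μ → Martingale M 𝓖 μ)
    (hequiv : μ ≪ ν ∧ ν ≪ μ)
    (Y : Ω → ℝ) (hYmeas : Measurable Y) (hYpos : ∀ᵐ ω ∂μ, 0 < Y ω)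
    (hYdens : ν = μ.withDensity (fun ω => ENNReal.ofReal (Y ω))) :
    (∀ M : ℝ≥0 → Ω → ℝ, Martingale M 𝓕 ν → Martingale M 𝓖 ν) ↔
      (∀ (t : ℝ≥0) (X : Ω → ℝ), 0 ≤ X →
        Measurable[⨆ s : ℝ≥0, (𝓕 s : MeasurableSpace Ω)] X →
        (fun ω => (μ[fun ω' => X ω' * Y ω' | 𝓖 t]) ω / (μ[Y | 𝓖 t]) ω) =ᵐ[μ]
        (fun ω => (μ[fun ω' => X ω' * Y ω' | 𝓕 t]) ω / (μ[Y | 𝓕 t]) ω)) :=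
  H_equivalent_measure_criterion_general 𝓕 𝓖 hle hequiv Y hYmeas hYpos hYdens

end Enlargement
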